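/- arXiv:1407.7707 — 8 statements merged into one kernel-verified Lean document; each statement's English description precedes it below -/
import Mathlib

section
/- Every n-vertex d-degenerate graph with n ≥ d has at most 2^d (n - d + 1) cliques (including the empty set). -/
/-!
Pick a vertex `v` of degree at most `d` in the current vertex set `X`. The cliques in `X`
avoiding `v` are the cliques in `X \ {v}`, while a clique containing `v` is `v` together with
a subset of its at most `d` neighbours in `X`, so there are at most `2 ^ d` of those. Each
deleted vertex thus costs at most `2 ^ d` cliques, and once only `d` vertices are left there
are at most `2 ^ d` subsets at all.
-/

/-- A graph is `d`-degenerate if every nonempty induced subgraph has a vertex of degree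
at most `d`. -/
def Degenerate {V : Type*} [DecidableEq V] (G : SimpleGraph V) [DecidableRel G.Adj]
    (d : ℕ) : Prop :=
  ∀ X : Finset V, X.Nonempty → ∃ v ∈ X, (X.filter (fun u => G.Adj v u)).card ≤ d

open Finset

namespace SimpleGraph

variable {V : Type*} [DecidableEq V] (G : SimpleGraph V) [DecidableRel G.Adj]

def cliquesIn (X : Finset V) : Finset (Finset V) :=
  X.powerset.filter fun s => G.IsClique (s : Set V)

variable {G}

@[simp]
theorem mem_cliquesIn {X s : Finset V} : s ∈ G.cliquesIn X ↔ s ⊆ X ∧ G.IsClique (s : Set V) := by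
  simp [cliquesIn]

theorem card_cliquesIn_le_two_pow_card (X : Finset V) : #(G.cliquesIn X) ≤ 2 ^ #X :=
  (card_filter_le _ _).trans (card_powerset X).le

theorem cliquesIn_erase (X : Finset V) (v : V) :
    G.cliquesIn (X.erase v) = (G.cliquesIn X).filter (v ∉ ·) := by
  ext s
  simp only [mem_filter, mem_cliquesIn, subset_erase]
  tauto

theorem card_filter_mem_cliquesIn_le (X : Finset V) (v : V) :
    #((G.cliquesIn X).filter (v ∈ ·)) ≤ 2 ^ #(X.filter (G.Adj v)) := by
  have hsub : (G.cliquesIn X).filter (v ∈ ·) ⊆ (X.filter (G.Adj v)).powerset.image (insert v) := by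
    intro s hs
    obtain ⟨⟨hsX, hs⟩, hvs⟩ := by simpa only [mem_filter, mem_cliquesIn] using hs
    refine mem_image.2 ⟨s.erase v, mem_powerset.2 fun u hu => ?_, insert_erase hvs⟩
    obtain ⟨huv, hus⟩ := mem_erase.1 hu
    exact mem_filter.2 ⟨hsX hus, hs hvs hus (Ne.symm huv)⟩
  calc #((G.cliquesIn X).filter (v ∈ ·))
      ≤ #((X.filter (G.Adj v)).powerset) := (card_le_card hsub).trans card_image_le
    _ = 2 ^ #(X.filter (G.Adj v)) := card_powerset _

end SimpleGraph

open SimpleGraph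

theorem Degenerate.card_cliquesIn_le {V : Type*} [DecidableEq V] {G : SimpleGraph V}
    [DecidableRel G.Adj] {d : ℕ} (hdeg : Degenerate G d) (X : Finset V) (hX : d ≤ #X) :
    #(G.cliquesIn X) ≤ 2 ^ d * (#X - d + 1) := by
  obtain ⟨k, hk⟩ := Nat.exists_eq_add_of_le hX
  rw [hk, Nat.add_sub_cancel_left]
  induction k generalizing X with
  | zero => simpa [hk] using card_cliquesIn_le_two_pow_card (G := G) X
  | succ k ih =>
    obtain ⟨v, hvX, hdeg_v⟩ := hdeg X (card_pos.1 (by omega))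
    have hwith : #((G.cliquesIn X).filter (v ∈ ·)) ≤ 2 ^ d :=
      (card_filter_mem_cliquesIn_le X v).trans (Nat.pow_le_pow_right two_pos hdeg_v)
    have hwithout : #((G.cliquesIn X).filter (v ∉ ·)) ≤ 2 ^ d * (k + 1) := by
      rw [← cliquesIn_erase]
      exact ih _ (by rw [card_erase_of_mem hvX]; omega) (by rw [card_erase_of_mem hvX]; omega)
    calc #(G.cliquesIn X)
        = #((G.cliquesIn X).filter (v ∈ ·)) + #((G.cliquesIn X).filter (v ∉ ·)) :=
          (card_filter_add_card_filter_not _).symm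
      _ ≤ 2 ^ d + 2 ^ d * (k + 1) := Nat.add_le_add hwith hwithout
      _ = 2 ^ d * (k + 1 + 1) := by ring

/-- Every `n`-vertex `d`-degenerate graph with `n ≥ d` has at most `2^d * (n - d + 1)`
cliques (including the empty set). -/
theorem clique_count_of_degenerate {V : Type*} [Fintype V] [DecidableEq V]
    (G : SimpleGraph V) [DecidableRel G.Adj] {d n : ℕ}
    (hn : Fintype.card V = n) (hdn : d ≤ n) (hdeg : Degenerate G d) :
    Nat.card {s : Finset V // G.IsClique (s : Set V)} ≤ 2 ^ d * (n - d + 1) := by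
  have hcard : Nat.card {s : Finset V // G.IsClique (s : Set V)} = #(G.cliquesIn univ) := by
    rw [Nat.card_eq_fintype_card, Fintype.card_subtype, cliquesIn, powerset_univ]
  rw [hcard, ← hn, ← card_univ]
  exact hdeg.card_cliquesIn_le univ (by rwa [card_univ, hn])
end

section
/- For all natural numbers k ≤ m, the partial binomial sum ∑_{i=0}^{k} C(m, i) is at most (e·m/k)^k (for k ≥ 1). -/
/-! Multiplying the partial sum by `x ^ k` with `x = k / m ≤ 1` only shrinks each term
`C(m, i) x ^ k` below `C(m, i) x ^ i`, so the product is at most `(1 + x) ^ m ≤ e ^ (m x) = e ^ k`. -/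

open Finset

lemma sum_range_choose_mul_pow_le_one_add_pow {R : Type*} [CommSemiring R] [PartialOrder R]
    [IsOrderedRing R] {x : R} (hx₀ : 0 ≤ x) (hx₁ : x ≤ 1) {m k : ℕ} (hkm : k ≤ m) :
    (∑ i ∈ range (k + 1), (m.choose i : R)) * x ^ k ≤ (1 + x) ^ m :=
  calc (∑ i ∈ range (k + 1), (m.choose i : R)) * x ^ k
      ≤ ∑ i ∈ range (k + 1), (m.choose i : R) * x ^ i := by
        rw [sum_mul]
        refine sum_le_sum fun i hi ↦ mul_le_mul_of_nonneg_left ?_ (by positivity)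
        exact pow_le_pow_of_le_one hx₀ hx₁ (mem_range_succ_iff.mp hi)
    _ ≤ ∑ i ∈ range (m + 1), (m.choose i : R) * x ^ i :=
        sum_le_sum_of_subset_of_nonneg (range_subset_range.mpr (by omega))
          fun _ _ _ ↦ by positivity
    _ = (1 + x) ^ m := by
        rw [add_comm 1 x, add_pow]
        exact sum_congr rfl fun i _ ↦ by ring

lemma one_add_div_pow_le_exp (n : ℕ) {t : ℝ} (ht : -n ≤ t) : (1 + t / n) ^ n ≤ Real.exp t := by
  simpa [neg_div] using Real.one_sub_div_pow_le_exp_neg (n := n) (t := -t) (by linarith)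

theorem partial_binomial_sum_le_general {m k : ℕ} (hkm : k ≤ m) :
    (∑ i ∈ Finset.range (k + 1), (m.choose i : ℝ)) ≤
      (Real.exp 1 * m / k) ^ k := by
  rcases k.eq_zero_or_pos with rfl | hk
  · simp
  have hm : 0 < m := hk.trans_le hkm
  have hbound : (∑ i ∈ range (k + 1), (m.choose i : ℝ)) * (k / m) ^ k ≤ Real.exp 1 ^ k :=
    calc _ ≤ (1 + k / m : ℝ) ^ m := sum_range_choose_mul_pow_le_one_add_pow (by positivity)
            (div_le_one_of_le₀ (by exact_mod_cast hkm) m.cast_nonneg) hkm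
      _ ≤ Real.exp k := one_add_div_pow_le_exp m (by linarith [(k.cast_nonneg : (0 : ℝ) ≤ k)])
      _ = Real.exp 1 ^ k := (Real.exp_one_pow k).symm
  rwa [← le_div_iff₀ (by positivity), ← div_pow, div_div_eq_mul_div] at hbound

/-- For `1 ≤ k ≤ m`, the partial binomial sum `∑_{i=0}^{k} C(m, i)` is at most
`(e·m/k)^k`. -/
theorem partial_binomial_sum_le {m k : ℕ} (hk : 1 ≤ k) (hkm : k ≤ m) :
    (∑ i ∈ Finset.range (k + 1), (m.choose i : ℝ)) ≤
      (Real.exp 1 * m / k) ^ k :=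
  partial_binomial_sum_le_general hkm
end

section
/- Let G be a graph on m vertices, and let Y ⊆ V(G) with |Y| = t such that Y has at most m/4 non-adjacent pairs inside Y. If every pair of distinct vertices of G has at least (4/5)m common neighbors and (11/20)m ≥ t, then G contains a subdivision of K_t. -/
/-- `G` contains a subdivision of `H`: an injective map of branch vertices together with
internally vertex-disjoint paths (whose internal vertices avoid branch vertices)
for each edge of `H`. -/
def ContainsSubdivision {V : Type*} {W : Type*} (G : SimpleGraph V) (H : SimpleGraph W) : Prop :=
  ∃ (f : W → V) (p : ∀ ⦃u v : W⦄, H.Adj u v → G.Walk (f u) (f v)),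
    Function.Injective f ∧
    (∀ (u v : W) (h : H.Adj u v), (p h).IsPath) ∧
    (∀ (u v : W) (h : H.Adj u v), ∀ x ∈ (p h).support.tail.dropLast, x ∉ Set.range f) ∧
    (∀ (u v u' v' : W) (h : H.Adj u v) (h' : H.Adj u' v'), s(u, v) ≠ s(u', v') →
      ∀ x ∈ (p h).support.tail.dropLast, x ∉ (p h').support.tail.dropLast)

/-- If `Y` is a `t`-set with at most `m/4` non-adjacent pairs inside it, every pair of
distinct vertices of `G` has at least `(4/5)m` common neighbors and `(11/20)m ≥ t`,
then `G` contains a subdivision of `K_t`. -/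
theorem containsSubdivision_of_dense_core {V : Type*} [Fintype V] (G : SimpleGraph V)
    {t m : ℕ} (hm : Fintype.card V = m) (Y : Finset V) (hY : Y.card = t)
    (hnon : (Nat.card {e : Sym2 V // ¬e.IsDiag ∧ (∀ v ∈ e, v ∈ Y) ∧ e ∉ G.edgeSet} : ℝ)
      ≤ m / 4)
    (hcommon : ∀ u v : V, u ≠ v →
      (4 : ℝ) / 5 * m ≤ Nat.card {w : V // G.Adj u w ∧ G.Adj v w})
    (hmt : (t : ℝ) ≤ 11 / 20 * m) :
    ContainsSubdivision G (⊤ : SimpleGraph (Fin t)) := by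
  classical
  -- branch vertices
  obtain ⟨eY⟩ : Nonempty (Fin t ≃ Y) := ⟨(Y.equivFinOfCardEq hY).symm⟩
  set f : Fin t → V := fun i => (eY i : V) with hf
  have hfY : ∀ i, f i ∈ Y := fun i => (eY i).2
  have hfinj : Function.Injective f := fun a b h => eY.injective (Subtype.ext h)
  -- the non-edges inside Y
  set NE : Finset (Sym2 V) :=
    Finset.univ.filter (fun e => ¬e.IsDiag ∧ (∀ v ∈ e, v ∈ Y) ∧ e ∉ G.edgeSet) with hNE
  have hNEcard : (NE.card : ℝ) ≤ (m : ℝ) / 4 := by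
    have h1 : Nat.card {e : Sym2 V // ¬e.IsDiag ∧ (∀ v ∈ e, v ∈ Y) ∧ e ∉ G.edgeSet}
        = NE.card := by
      rw [Nat.card_eq_fintype_card, hNE, Fintype.card_subtype]
    rw [← h1]; exact hnon
  -- candidate midpoints
  set A : Sym2 V → Finset V :=
    fun e => Finset.univ.filter (fun w => (∀ x ∈ e, G.Adj x w) ∧ w ∉ Y) with hA
  have hAcard : ∀ e ∈ NE, (NE.card : ℝ) ≤ ((A e).card : ℝ) := by
    intro e he
    induction e using Sym2.ind with
    | _ u v =>
      rw [hNE, Finset.mem_filter] at he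
      obtain ⟨-, hdiag, hYm, hedge⟩ := he
      have huv : u ≠ v := fun h => hdiag (by simp [h])
      have hcom := hcommon u v huv
      set C : Finset V := Finset.univ.filter (fun w => G.Adj u w ∧ G.Adj v w) with hC
      have hCc : (Nat.card {w : V // G.Adj u w ∧ G.Adj v w}) = C.card := by
        rw [Nat.card_eq_fintype_card, hC, Fintype.card_subtype]
      rw [hCc] at hcom
      have hsub : C ⊆ (A s(u, v)) ∪ Y := by
        intro w hw
        rw [hC, Finset.mem_filter] at hw
        by_cases hwY : w ∈ Y
        · exact Finset.mem_union_right _ hwY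
        · refine Finset.mem_union_left _ ?_
          rw [hA, Finset.mem_filter]
          refine ⟨Finset.mem_univ _, fun x hx => ?_, hwY⟩
          rw [Sym2.mem_iff] at hx
          rcases hx with rfl | rfl
          · exact hw.2.1
          · exact hw.2.2
      have h2 : C.card ≤ (A s(u, v)).card + Y.card :=
        le_trans (Finset.card_le_card hsub) (Finset.card_union_le _ _)
      have h2' : (C.card : ℝ) ≤ ((A s(u, v)).card : ℝ) + t := by
        have := (Nat.cast_le (α := ℝ)).2 h2
        push_cast at this ⊢
        rw [hY] at this
        exact this
      nlinarith [hNEcard, hmt]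
  -- Hall's theorem
  have hall : ∃ g : {e // e ∈ NE} → V, Function.Injective g ∧ ∀ x, g x ∈ A x.1 := by
    rw [← Finset.all_card_le_biUnion_card_iff_existsInjective' (fun x : {e // e ∈ NE} => A x.1)]
    intro s
    rcases s.eq_empty_or_nonempty with rfl | ⟨x, hx⟩
    · simp
    · have h1 : s.card ≤ NE.card := by
        have := Finset.card_le_card (Finset.subset_univ s)
        simpa [Finset.card_attach] using this.trans_eq (by simp)
      have h2 : NE.card ≤ (A x.1).card :=
        (Nat.cast_le (α := ℝ)).1 (hAcard x.1 x.2)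
      exact (h1.trans h2).trans (Finset.card_le_card (Finset.subset_biUnion_of_mem (fun x : {e // e ∈ NE} => A x.1) hx))
  obtain ⟨g, hginj, hgmem⟩ := hall
  -- membership of nonedges of the core
  have hmemNE : ∀ {u v : Fin t}, u ≠ v → ¬G.Adj (f u) (f v) → s(f u, f v) ∈ NE := by
    intro u v huv hn
    rw [hNE, Finset.mem_filter]
    refine ⟨Finset.mem_univ _, fun h => huv (hfinj (Sym2.mk_isDiag_iff.1 h)), fun x hx => ?_,
      fun h => hn ((SimpleGraph.mem_edgeSet G).1 h)⟩
    rw [Sym2.mem_iff] at hx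
    rcases hx with rfl | rfl
    · exact hfY u
    · exact hfY v
  have hg1 : ∀ (e : {e // e ∈ NE}), (∀ x ∈ e.1, G.Adj x (g e)) ∧ g e ∉ Y := by
    intro e
    have := hgmem e
    rw [hA, Finset.mem_filter] at this
    exact this.2
  refine ⟨f, fun u v h =>
    if hn : G.Adj (f u) (f v) then SimpleGraph.Walk.cons hn SimpleGraph.Walk.nil else
      SimpleGraph.Walk.cons
        ((hg1 ⟨s(f u, f v), hmemNE h.ne hn⟩).1 (f u) (by simp))
        (SimpleGraph.Walk.cons
          (((hg1 ⟨s(f u, f v), hmemNE h.ne hn⟩).1 (f v) (by simp)).symm)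
          SimpleGraph.Walk.nil), hfinj, ?_, ?_, ?_⟩
  · intro u v h
    by_cases hn : G.Adj (f u) (f v)
    · simp only [dif_pos hn]
      simp [SimpleGraph.Walk.isPath_def, hn.ne]
    · simp only [dif_neg hn]
      have h1 := (hg1 ⟨s(f u, f v), hmemNE h.ne hn⟩).1 (f u) (by simp)
      have h2 := (hg1 ⟨s(f u, f v), hmemNE h.ne hn⟩).1 (f v) (by simp)
      simp [SimpleGraph.Walk.isPath_def, h1.ne, h1.ne', h2.ne, h2.ne', hfinj.ne h.ne]
  · intro u v h x hx
    by_cases hn : G.Adj (f u) (f v)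
    · simp only [dif_pos hn] at hx
      simp at hx
    · simp only [dif_neg hn] at hx
      simp only [SimpleGraph.Walk.support_cons, SimpleGraph.Walk.support_nil, List.tail_cons,
        List.dropLast, List.mem_singleton] at hx
      subst hx
      rintro ⟨i, hi⟩
      exact (hg1 ⟨s(f u, f v), hmemNE h.ne hn⟩).2 (hi ▸ hfY i)
  · intro u v u' v' h h' hne x hx
    by_cases hn : G.Adj (f u) (f v)
    · simp only [dif_pos hn] at hx
      simp at hx
    by_cases hn' : G.Adj (f u') (f v')
    · simp only [dif_pos hn']
      simp
    simp only [dif_neg hn] at hx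
    simp only [dif_neg hn']
    simp only [SimpleGraph.Walk.support_cons, SimpleGraph.Walk.support_nil, List.tail_cons,
      List.dropLast, List.mem_singleton] at hx ⊢
    subst hx
    have hfe : s(f u, f v) ≠ s(f u', f v') := by
      intro hh
      apply hne
      apply Sym2.map.injective hfinj
      rwa [Sym2.map_pair_eq, Sym2.map_pair_eq]
    exact fun hh => hfe (congrArg Subtype.val (hginj hh))
end

section
/- Let t ≥ 1 and let G be an m-vertex graph with no K_t-subdivision whose minimum degree is at least (9/10)m. Then m ≤ max{(20/11)t, t^2/5}. -/
/-!
Suppose `m` exceeds the bound. Every vertex misses at most `m / 10 - 1` others, so averaging over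
all `t`-sets gives a `t`-set `B` spanning at most `(m - 10) t (t - 1) / (20 (m - 1))` non-edges.
Two vertices of `B` have at least `4 m / 5 - t` common neighbours outside `B`, and since
`t ^ 2 < 5 m` this exceeds the number of non-edges in `B`. Hall's theorem then routes every non-edge
of `B` through its own common neighbour outside `B`, and with the edges of `G` inside `B` these
paths form a `K_t`-subdivision with branch set `B`.
-/

open Finset SimpleGraph

theorem Finset.exists_injective_mem_of_card_le {ι α : Type*} [DecidableEq α] {D : Finset ι}
    (pool : ι → Finset α) (h : ∀ i ∈ D, #D ≤ #(pool i)) :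
    ∃ g : D → α, Function.Injective g ∧ ∀ i : D, g i ∈ pool i := by
  refine (all_card_le_biUnion_card_iff_exists_injective fun i : D => pool i).1 fun s => ?_
  obtain rfl | ⟨i, hi⟩ := s.eq_empty_or_nonempty
  · simp
  calc #s ≤ Fintype.card D := card_le_univ s
    _ = #D := Fintype.card_coe D
    _ ≤ #(pool i) := h i i.2
    _ ≤ #(s.biUnion fun i => pool i) :=
        card_le_card (subset_biUnion_of_mem (fun i : D => pool i) hi)

theorem containsSubdivision_of_detours {V W : Type*} {G : SimpleGraph V} {H : SimpleGraph W}
    {f : W → V} (hf : Function.Injective f) {D : Finset (Sym2 V)}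
    (hD : ∀ ⦃u v⦄, H.Adj u v → ¬G.Adj (f u) (f v) → s(f u, f v) ∈ D)
    {g : D → V} (hg : Function.Injective g) (hg_adj : ∀ e : D, ∀ x ∈ (e : Sym2 V), G.Adj x (g e))
    (hg_range : ∀ e, g e ∉ Set.range f) : ContainsSubdivision G H := by
  classical
  let detour : ∀ ⦃u v⦄, H.Adj u v → ¬G.Adj (f u) (f v) → D := fun _ _ h had => ⟨_, hD h had⟩
  let p : ∀ ⦃u v⦄, H.Adj u v → G.Walk (f u) (f v) := fun u v h =>
    if had : G.Adj (f u) (f v) then had.toWalk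
    else .cons (hg_adj (detour h had) _ (Sym2.mem_mk_left _ _))
      (.cons (hg_adj (detour h had) _ (Sym2.mem_mk_right _ _)).symm .nil)
  have internal : ∀ ⦃u v⦄ (h : H.Adj u v), ∀ x ∈ (p h).support.tail.dropLast,
      ∃ had, x = g (detour h had) := by
    intro u v h x hx
    by_cases had : G.Adj (f u) (f v) <;> simp [p, had] at hx
    exact ⟨had, hx⟩
  refine ⟨f, p, hf, fun u v h => ?_, fun u v h x hx => ?_, fun u v u' v' h h' hne x hx hx' => ?_⟩
  · by_cases had : G.Adj (f u) (f v)
    · simp [p, had, had.ne]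
    · have hu : f u ≠ g (detour h had) := fun he => hg_range _ ⟨u, he⟩
      have hv : f v ≠ g (detour h had) := fun he => hg_range _ ⟨v, he⟩
      simp [p, had, hf.ne h.ne, hu, Ne.symm hv]
  · obtain ⟨had, rfl⟩ := internal h x hx
    exact hg_range _
  · obtain ⟨had, rfl⟩ := internal h x hx
    obtain ⟨had', hx'⟩ := internal h' _ hx'
    have := congrArg Subtype.val (hg hx')
    exact hne (Sym2.map.injective hf this)

theorem containsSubdivision_top_of_card_le {V : Type*} [Fintype V] [DecidableEq V]
    {G : SimpleGraph V} [DecidableRel G.Adj] {t : ℕ} {B : Finset V} (hB : #B = t)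
    (hpool : ∀ ⦃u v⦄, u ∈ B → v ∈ B → Gᶜ.Adj u v →
      #(Gᶜ.edgeFinset ∩ B.sym2) ≤ #{w ∈ Bᶜ | G.Adj u w ∧ G.Adj v w}) :
    ContainsSubdivision G (⊤ : SimpleGraph (Fin t)) := by
  set D := Gᶜ.edgeFinset ∩ B.sym2
  have mem_D {u v : V} : s(u, v) ∈ D ↔ Gᶜ.Adj u v ∧ u ∈ B ∧ v ∈ B := by
    simp only [D, mem_inter, mem_edgeFinset, mem_edgeSet, mem_sym2_iff, Sym2.forall_mem_pair]
  obtain ⟨g, hg, hg_mem⟩ := exists_injective_mem_of_card_le (D := D)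
    (fun e => {w ∈ Bᶜ | ∀ x ∈ e, G.Adj x w}) fun e he => by
      induction e using Sym2.ind with
      | h u v =>
        simp only [Sym2.forall_mem_pair]
        exact hpool (mem_D.1 he).2.1 (mem_D.1 he).2.2 (mem_D.1 he).1
  let φ : Fin t ≃ B := (Fintype.equivFinOfCardEq (by simpa using hB)).symm
  have hφ : Function.Injective fun i => (φ i : V) := Subtype.val_injective.comp φ.injective
  refine containsSubdivision_of_detours hφ (D := D)
    (fun i j hij hnadj => mem_D.2 ⟨⟨hφ.ne hij.ne, hnadj⟩, (φ i).2, (φ j).2⟩) hg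
    (fun e => (mem_filter.1 (hg_mem e)).2)
    (fun e ⟨i, hi⟩ => mem_compl.1 (mem_filter.1 (hg_mem e)).1 (hi ▸ (φ i).2))

namespace SimpleGraph

variable {V : Type*} [Fintype V]

theorem le_card_sub_one_of_forall_le_degree {G : SimpleGraph V} [DecidableRel G.Adj] [Nonempty V]
    {δ : ℝ} (hδ : ∀ v, δ ≤ G.degree v) :
    δ ≤ Fintype.card V - 1 := by
  obtain ⟨v⟩ := ‹Nonempty V›
  have : (G.degree v + 1 : ℝ) ≤ Fintype.card V := by exact_mod_cast G.degree_lt_card_verts v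
  linarith [hδ v]

variable [DecidableEq V] (H : SimpleGraph V) [DecidableRel H.Adj]

theorem sum_card_edgeFinset_inter_sym2 {t : ℕ} (ht : 2 ≤ t) :
    ∑ B ∈ univ.powersetCard t, #(H.edgeFinset ∩ B.sym2)
      = #H.edgeFinset * (Fintype.card V - 2).choose (t - 2) := by
  have hcount : ∀ e ∈ H.edgeFinset,
      #{B ∈ univ.powersetCard t | e ∈ B.sym2} = (Fintype.card V - 2).choose (t - 2) := by
    intro e he
    induction e using Sym2.ind with
    | h u v =>
      have huv : #{u, v} = 2 := card_pair (H.ne_of_adj (mem_edgeFinset.1 he))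
      have hpair (B : Finset V) : s(u, v) ∈ B.sym2 ↔ {u, v} ⊆ B := by simp [insert_subset_iff]
      simp_rw [hpair]
      rw [card_filter_powersetCard_subset _ _ _ (subset_univ _) (huv ▸ ht), card_univ, huv]
  calc ∑ B ∈ univ.powersetCard t, #(H.edgeFinset ∩ B.sym2)
      = ∑ e ∈ H.edgeFinset, #{B ∈ univ.powersetCard t | e ∈ B.sym2} := by
        simp only [card_filter, ← filter_mem_eq_inter]
        exact sum_comm
    _ = #H.edgeFinset * (Fintype.card V - 2).choose (t - 2) := by
        rw [sum_congr rfl hcount, sum_const, smul_eq_mul]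

theorem edgeFinset_inter_sym2_eq_empty {B : Finset V} (hB : #B ≤ 1) :
    H.edgeFinset ∩ B.sym2 = ∅ := by
  refine eq_empty_of_forall_notMem fun e he => ?_
  induction e using Sym2.ind with
  | h u v =>
    simp only [mem_inter, mem_edgeFinset, mem_edgeSet, mk_mem_sym2_iff] at he
    exact (one_lt_card.2 ⟨u, he.2.1, v, he.2.2, he.1.ne⟩).not_ge hB

theorem exists_card_edgeFinset_inter_sym2_mul_le {t : ℕ} (ht : t ≤ Fintype.card V) :
    ∃ B : Finset V, #B = t ∧
      #(H.edgeFinset ∩ B.sym2) * (Fintype.card V).choose 2 ≤ #H.edgeFinset * t.choose 2 := by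
  obtain ht2 | ht2 := lt_or_ge t 2
  · obtain ⟨B, -, hB⟩ := exists_subset_card_eq (s := (univ : Finset V)) (by simpa using ht)
    refine ⟨B, hB, ?_⟩
    simp [H.edgeFinset_inter_sym2_eq_empty (hB.trans_le (by omega))]
  have hsum : ∑ B ∈ univ.powersetCard t, #(H.edgeFinset ∩ B.sym2) * (Fintype.card V).choose 2
      = ∑ _B ∈ (univ : Finset V).powersetCard t, #H.edgeFinset * t.choose 2 := by
    rw [← sum_mul, H.sum_card_edgeFinset_inter_sym2 ht2, sum_const, card_powersetCard, card_univ,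
      smul_eq_mul]
    calc _ = #H.edgeFinset * ((Fintype.card V).choose 2 * (Fintype.card V - 2).choose (t - 2)) := by
          ring
      _ = _ := by rw [← Nat.choose_mul ht2]; ring
  obtain ⟨B, hB, hle⟩ := exists_le_of_sum_le (powersetCard_nonempty.2 (by simpa using ht)) hsum.le
  exact ⟨B, (mem_powersetCard.1 hB).2, hle⟩

variable {G : SimpleGraph V} [DecidableRel G.Adj]

theorem degree_add_degree_le_card_filter_add (B : Finset V) (u v : V) :
    G.degree u + G.degree v ≤ #{w ∈ Bᶜ | G.Adj u w ∧ G.Adj v w} + #B + Fintype.card V := by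
  have hunion := card_union_add_card_inter (G.neighborFinset u) (G.neighborFinset v)
  have hinter : G.neighborFinset u ∩ G.neighborFinset v ⊆ {w ∈ Bᶜ | G.Adj u w ∧ G.Adj v w} ∪ B := by
    intro w hw
    by_cases hwB : w ∈ B <;> simp_all
  have := card_le_card hinter
  have := card_union_le {w ∈ Bᶜ | G.Adj u w ∧ G.Adj v w} B
  have := card_le_univ (G.neighborFinset u ∪ G.neighborFinset v)
  simp only [card_neighborFinset_eq_degree] at hunion
  omega

theorem two_mul_card_edgeFinset_compl_le {δ : ℝ} (hδ : ∀ v, δ ≤ G.degree v) :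
    2 * (#Gᶜ.edgeFinset : ℝ) ≤ Fintype.card V * (Fintype.card V - 1 - δ) := by
  have hcompl (v : V) : (Gᶜ.degree v : ℝ) = Fintype.card V - 1 - G.degree v := by
    have := G.degree_lt_card_verts v
    rw [degree_compl, Nat.cast_sub (by omega), Nat.cast_sub (by omega), Nat.cast_one]
  calc 2 * (#Gᶜ.edgeFinset : ℝ) = ∑ v, (Gᶜ.degree v : ℝ) := by
        exact_mod_cast (Gᶜ.sum_degrees_eq_twice_card_edges).symm
    _ ≤ ∑ _v : V, (Fintype.card V - 1 - δ : ℝ) :=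
        sum_le_sum fun v _ => by rw [hcompl]; linarith [hδ v]
    _ = Fintype.card V * (Fintype.card V - 1 - δ) := by rw [sum_const, card_univ, nsmul_eq_mul]

theorem exists_card_edgeFinset_compl_inter_sym2_le [Nonempty V] {δ : ℝ}
    (hδ : ∀ v, δ ≤ G.degree v) {t : ℕ} (ht : t ≤ Fintype.card V) :
    ∃ B : Finset V, #B = t ∧ (#(Gᶜ.edgeFinset ∩ B.sym2) : ℝ) * (Fintype.card V - 1)
      ≤ (Fintype.card V - 1 - δ) * t.choose 2 := by
  obtain ⟨B, hB, hsparse⟩ := Gᶜ.exists_card_edgeFinset_inter_sym2_mul_le ht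
  refine ⟨B, hB, le_of_mul_le_mul_left ?_ (Nat.cast_pos.2 (Fintype.card_pos (α := V)))⟩
  have hsparse' : (#(Gᶜ.edgeFinset ∩ B.sym2) * (Fintype.card V).choose 2 : ℝ)
      ≤ #Gᶜ.edgeFinset * t.choose 2 := by exact_mod_cast hsparse
  rw [Nat.cast_choose_two] at hsparse'
  linarith [mul_le_mul_of_nonneg_right (two_mul_card_edgeFinset_compl_le hδ)
    (Nat.cast_nonneg (α := ℝ) (t.choose 2))]

end SimpleGraph

theorem card_le_of_min_degree_no_subdivision_general {V : Type*} [Fintype V] [DecidableEq V]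
    (G : SimpleGraph V) [DecidableRel G.Adj] {t m : ℕ}
    (hm : Fintype.card V = m)
    (hsub : ¬ ContainsSubdivision G (⊤ : SimpleGraph (Fin t)))
    (hdeg : ∀ v : V, (9 : ℝ) / 10 * m ≤ G.degree v) :
    (m : ℝ) ≤ max (20 / 11 * t) (t ^ 2 / 5) := by
  subst hm
  by_contra! hlt
  -- The maximum is taken in `ℕ`: `20 / 11 * t = t`, and `t ^ 2 / 5 < m` means `t ^ 2 < 5 * m`.
  obtain ⟨htm, hsq⟩ := max_lt_iff.1 (by exact_mod_cast hlt : max (20 / 11 * t) (t ^ 2 / 5) < _)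
  set m := Fintype.card V
  replace htm : t < m := by simpa using htm
  replace hsq : (t ^ 2 + 1 : ℝ) ≤ 5 * m := by
    have := (Nat.div_lt_iff_lt_mul (by norm_num)).1 hsq
    exact_mod_cast (by omega : t ^ 2 + 1 ≤ 5 * m)
  have : Nonempty V := Fintype.card_pos_iff.1 (by omega)
  have hm : (10 : ℝ) ≤ m := by linarith [le_card_sub_one_of_forall_le_degree hdeg]
  obtain ⟨B, hB, hsparse⟩ := exists_card_edgeFinset_compl_inter_sym2_le hdeg htm.le
  rw [Nat.cast_choose_two] at hsparse
  -- `10 t ≤ t ^ 2 + 25 < 5 m + 25` bounds the linear term in `t`.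
  have harith : (m - 10 : ℝ) * (t * (t - 1)) < (16 * m - 20 * t) * (m - 1) := by
    nlinarith [mul_le_mul_of_nonneg_left hsq (by linarith : (0 : ℝ) ≤ m - 10),
      mul_nonneg (sq_nonneg (t - 5 : ℝ)) (by linarith : (0 : ℝ) ≤ 19 * m - 10)]
  have hfew : (#(Gᶜ.edgeFinset ∩ B.sym2) : ℝ) < 4 / 5 * m - t :=
    lt_of_mul_lt_mul_right (by linarith) (by linarith : (0 : ℝ) ≤ 20 * (m - 1))
  refine hsub (containsSubdivision_top_of_card_le hB fun u v _ _ _ => ?_)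
  have hpool : (G.degree u + G.degree v : ℝ) ≤ #{w ∈ Bᶜ | G.Adj u w ∧ G.Adj v w} + t + m := by
    exact_mod_cast hB ▸ degree_add_degree_le_card_filter_add B u v
  have : (#(Gᶜ.edgeFinset ∩ B.sym2) : ℝ) ≤ #{w ∈ Bᶜ | G.Adj u w ∧ G.Adj v w} := by
    linarith [hdeg u, hdeg v]
  exact_mod_cast this

/-- If `G` is an `m`-vertex graph with no `K_t`-subdivision and minimum degree at least
`(9/10)m`, then `m ≤ max{(20/11)t, t^2/5}`. -/
theorem card_le_of_min_degree_no_subdivision {V : Type*} [Fintype V] [DecidableEq V]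
    (G : SimpleGraph V) [DecidableRel G.Adj] {t m : ℕ} (ht : 1 ≤ t)
    (hm : Fintype.card V = m)
    (hsub : ¬ ContainsSubdivision G (⊤ : SimpleGraph (Fin t)))
    (hdeg : ∀ v : V, (9 : ℝ) / 10 * m ≤ G.degree v) :
    (m : ℝ) ≤ max (20 / 11 * t) (t ^ 2 / 5) :=
  card_le_of_min_degree_no_subdivision_general G hm hsub hdeg
end

section
/- Let t ≥ 1 and let G be an m-vertex graph with no K_t-subdivision and minimum degree at least (9/10)m. Then G is (1 - m/(2t^2), (20/11)t)-locally sparse, i.e., every vertex subset X with |X| ≥ (20/11)t contains a vertex whose degree in G[X] is at most (1 - m/(2t^2))|X|. -/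
/-!
Suppose every vertex of `X` had more than `(1 - ε)|X|` neighbours in `X`, where `ε = m/(2t²)`.
Then the complement has edge density at most `ε` on `X`, and repeatedly deleting a vertex of
maximum complement degree yields a `t`-set `S ⊆ X` of no larger density, so at most `m/4`
pairs of `S` are non-adjacent. By the degree condition any two vertices have at least `4m/5`
common neighbours, and `t ≤ 11m/20`; so Hall's theorem provides distinct common neighbours
outside `S` for all non-adjacent pairs of `S`, which together with the edges of `G[S]` form a
`K_t`-subdivision with branch vertices `S`.
-/

open Finset

theorem exists_injective_forall_mem_of_natCard_le {ι α : Type*} [Finite ι] [DecidableEq α]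
    (t : ι → Finset α) (h : ∀ i, Nat.card ι ≤ #(t i)) :
    ∃ f : ι → α, Function.Injective f ∧ ∀ i, f i ∈ t i := by
  have := Fintype.ofFinite ι
  refine (all_card_le_biUnion_card_iff_exists_injective t).1 fun s => ?_
  rcases s.eq_empty_or_nonempty with rfl | ⟨i, hi⟩
  · simp
  · calc #s ≤ Nat.card ι := Nat.card_eq_fintype_card (α := ι) ▸ card_le_univ s
      _ ≤ #(t i) := h i
      _ ≤ #(s.biUnion t) := card_le_card (subset_biUnion_of_mem t hi)

namespace SimpleGraph

variable {V : Type*} (G : SimpleGraph V) [DecidableRel G.Adj]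

theorem card_interedges_eq_sum_card_filter_adj (s t : Finset V) :
    #(G.interedges s t) = ∑ v ∈ s, #(t.filter (G.Adj v)) := by
  rw [interedges_def, card_filter, sum_product]
  simp only [card_filter]

variable [DecidableEq V]

theorem card_interedges_erase_add {s : Finset V} {v : V} (hv : v ∈ s) :
    #(G.interedges (s.erase v) (s.erase v)) + 2 * #(s.filter (G.Adj v)) =
      #(G.interedges s s) := by
  have hdeg : ∀ u ∈ s.erase v,
      #(s.filter (G.Adj u)) = #((s.erase v).filter (G.Adj u)) + if G.Adj u v then 1 else 0 := by
    intro u _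
    rw [← insert_erase hv, filter_insert, erase_insert (notMem_erase v s)]
    split_ifs <;> simp
  have hv' : (s.erase v).filter (G.Adj v) = s.filter (G.Adj v) := by
    rw [filter_erase, erase_eq_of_notMem (by simp)]
  simp only [card_interedges_eq_sum_card_filter_adj, ← add_sum_erase s _ hv,
    sum_congr rfl hdeg, sum_add_distrib, sum_boole, G.adj_comm _ v, hv', Nat.cast_id]
  ring

theorem exists_edgeDensity_erase_le {s : Finset V} (hs : s.Nonempty) :
    ∃ v ∈ s, G.edgeDensity (s.erase v) (s.erase v) ≤ G.edgeDensity s s := by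
  obtain ⟨v, hv, hmax⟩ := s.exists_max_image (fun u => #(s.filter (G.Adj u))) hs
  refine ⟨v, hv, ?_⟩
  have hsum : #(G.interedges s s) ≤ #s * #(s.filter (G.Adj v)) := by
    rw [card_interedges_eq_sum_card_filter_adj]
    exact sum_le_card_nsmul _ _ _ hmax
  have herase := G.card_interedges_erase_add hv
  rw [edgeDensity_def, edgeDensity_def, card_erase_of_mem hv]
  rcases Nat.lt_or_ge #s 2 with hs1 | hs2
  · rw [show #s - 1 = 0 by omega, Nat.cast_zero, mul_zero, div_zero]
    positivity
  · have hn : (1 : ℚ) < #s := by exact_mod_cast hs2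
    rw [Nat.cast_sub hs.card_pos, Nat.cast_one, div_le_div_iff₀ (by nlinarith) (by positivity)]
    have hsumQ : (#(G.interedges s s) : ℚ) ≤ #s * #(s.filter (G.Adj v)) := by
      exact_mod_cast hsum
    have herQ : (#(G.interedges (s.erase v) (s.erase v)) : ℚ) + 2 * #(s.filter (G.Adj v)) =
        #(G.interedges s s) := by exact_mod_cast herase
    -- for `n = #s`, maximality of `v` gives `n e(s \ v) ≤ (n - 2) e(s)`, and `n(n-2) ≤ (n-1)²`
    nlinarith [(show (0 : ℚ) ≤ #s by positivity)]

theorem exists_subset_card_eq_edgeDensity_le {t : ℕ} (s : Finset V) (hts : t ≤ #s) :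
    ∃ u ⊆ s, #u = t ∧ G.edgeDensity u u ≤ G.edgeDensity s s := by
  induction s using Finset.strongInduction with
  | H s ih =>
    rcases hts.eq_or_lt with rfl | hlt
    · exact ⟨s, subset_rfl, rfl, le_rfl⟩
    · obtain ⟨v, hv, hdens⟩ := G.exists_edgeDensity_erase_le (s := s) (card_pos.1 (by omega))
      obtain ⟨u, hus, hut, hu⟩ :=
        ih _ (erase_ssubset hv) (by rw [card_erase_of_mem hv]; omega)
      exact ⟨u, hus.trans (erase_subset v s), hut, hu.trans hdens⟩

theorem card_filter_compl_adj_add_card_filter_adj_le (s : Finset V) (v : V) :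
    #(s.filter (Gᶜ.Adj v)) + #(s.filter (G.Adj v)) ≤ #s := by
  rw [← card_filter_add_card_filter_not (s := s) (G.Adj v), add_comm]
  gcongr with u
  exact fun h => (compl_adj G v u).1 h |>.2

theorem edgeDensity_compl_le {s : Finset V} (hs : s.Nonempty) {ε : ℝ}
    (h : ∀ v ∈ s, (1 - ε) * #s ≤ #(s.filter (G.Adj v))) :
    (Gᶜ.edgeDensity s s : ℝ) ≤ ε := by
  have hnondeg : ∀ v ∈ s, (#(s.filter (Gᶜ.Adj v)) : ℝ) ≤ ε * #s := by
    intro v hv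
    have := G.card_filter_compl_adj_add_card_filter_adj_le s v
    have : (#(s.filter (Gᶜ.Adj v)) : ℝ) + #(s.filter (G.Adj v)) ≤ #s := by exact_mod_cast this
    linarith [h v hv]
  have hsum : (#(Gᶜ.interedges s s) : ℝ) ≤ #s * (ε * #s) := by
    rw [card_interedges_eq_sum_card_filter_adj, Nat.cast_sum]
    exact (sum_le_sum hnondeg).trans_eq (by rw [sum_const, nsmul_eq_mul])
  rw [edgeDensity_def]
  push_cast
  rw [div_le_iff₀ (by have := hs.card_pos; positivity)]
  linarith

theorem degree_add_degree_le_card_inter_add_card [Fintype V] (a b : V) :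
    G.degree a + G.degree b ≤ #(G.neighborFinset a ∩ G.neighborFinset b) + Fintype.card V := by
  rw [← card_neighborFinset_eq_degree, ← card_neighborFinset_eq_degree,
    ← card_union_add_card_inter, add_comm]
  exact Nat.add_le_add_left (card_le_univ _) _

end SimpleGraph

section Subdivision

open SimpleGraph

variable {V W : Type*}

theorem containsSubdivision_of_midpoints {G : SimpleGraph V} {H : SimpleGraph W} {f : W → V}
    (hf : Function.Injective f) (w : (H \ G.comap f).edgeSet → V) (hw : Function.Injective w)
    (hwf : ∀ e, w e ∉ Set.range f)
    (hadj : ∀ u v (huv : (H \ G.comap f).Adj u v),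
      G.Adj (f u) (w ⟨s(u, v), huv⟩) ∧ G.Adj (w ⟨s(u, v), huv⟩) (f v)) :
    ContainsSubdivision G H := by
  classical
  let p : ∀ ⦃u v : W⦄, H.Adj u v → G.Walk (f u) (f v) := fun u v h =>
    if hG : G.Adj (f u) (f v) then hG.toWalk
    else .cons (hadj u v ⟨h, hG⟩).1 (.cons (hadj u v ⟨h, hG⟩).2 .nil)
  have hinternal : ∀ u v (h : H.Adj u v), ∀ x ∈ (p h).support.tail.dropLast,
      ∃ huv : (H \ G.comap f).Adj u v, x = w ⟨s(u, v), huv⟩ := by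
    intro u v h x hx
    by_cases hG : G.Adj (f u) (f v)
    · simp [p, hG] at hx
    · simp only [p, hG, dite_false, Walk.support_cons, Walk.support_nil] at hx
      exact ⟨⟨h, hG⟩, by simpa using hx⟩
  refine ⟨f, p, hf, fun u v h => ?_, fun u v h x hx => ?_,
    fun u v u' v' h h' hne x hx hx' => ?_⟩
  · by_cases hG : G.Adj (f u) (f v)
    · simp [p, hG, hG.ne]
    · have hmid := hwf ⟨s(u, v), ⟨h, hG⟩⟩
      simp only [Set.mem_range, not_exists] at hmid
      simp [p, hG, Walk.isPath_def, hf.ne h.ne, hmid u, Ne.symm (hmid v)]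
  · obtain ⟨_, rfl⟩ := hinternal u v h x hx
    exact hwf _
  · obtain ⟨_, rfl⟩ := hinternal u v h x hx
    obtain ⟨_, he⟩ := hinternal u' v' h' _ hx'
    exact hne (congrArg Subtype.val (hw he))

theorem two_mul_natCard_edgeSet_sdiff_comap_le [Fintype W] [DecidableEq V] (G : SimpleGraph V)
    [DecidableRel G.Adj] (H : SimpleGraph W) (f : W ↪ V) {S : Finset V} (hS : ∀ i, f i ∈ S) :
    2 * Nat.card (H \ G.comap f).edgeSet ≤ #(Gᶜ.interedges S S) := by
  classical
  have hdarts : 2 * Nat.card (H \ G.comap f).edgeSet =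
      #(univ.filter fun (x, y) => (H \ G.comap f).Adj x y) := by
    rw [Nat.card_eq_fintype_card, ← edgeFinset_card]
    convert two_mul_card_edgeFinset (H \ G.comap f)
  rw [hdarts]
  refine card_le_card_of_injOn (fun p : W × W => (f p.1, f p.2)) (fun p hp => ?_)
    (fun p _ q _ hpq => ?_)
  · simp only [coe_filter, mem_univ, true_and, Set.mem_ofPred_eq, sdiff_adj, comap_adj] at hp
    simp [mk_mem_interedges_iff, hS, hp.2, f.injective.ne hp.1.ne]
  · simp only [Prod.mk.injEq, EmbeddingLike.apply_eq_iff_eq] at hpq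
    exact Prod.ext hpq.1 hpq.2

theorem containsSubdivision_of_card_le_card_inter_neighborFinset [Fintype V] [Fintype W]
    [DecidableEq V] (G : SimpleGraph V) [DecidableRel G.Adj] (H : SimpleGraph W) (f : W ↪ V)
    (h : ∀ u v, (H \ G.comap f).Adj u v →
      Fintype.card W + Nat.card (H \ G.comap f).edgeSet ≤
        #(G.neighborFinset (f u) ∩ G.neighborFinset (f v))) :
    ContainsSubdivision G H := by
  let N : Sym2 W → Finset V := Sym2.lift
    ⟨fun u v => (G.neighborFinset (f u) ∩ G.neighborFinset (f v)) \ univ.map f,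
      fun u v => by dsimp only; rw [inter_comm]⟩
  have hN : ∀ u v, N s(u, v) = (G.neighborFinset (f u) ∩ G.neighborFinset (f v)) \ univ.map f :=
    fun _ _ => rfl
  obtain ⟨w, hw, hwN⟩ := exists_injective_forall_mem_of_natCard_le
    (fun e : (H \ G.comap f).edgeSet => N e) fun ⟨e, he⟩ => by
      induction e using Sym2.ind with
      | _ u v =>
        have := h u v he
        have := le_card_sdiff (univ.map f) (G.neighborFinset (f u) ∩ G.neighborFinset (f v))
        rw [card_map, card_univ] at this
        simp only [hN]
        omega
  refine containsSubdivision_of_midpoints f.injective w hw (fun ⟨e, he⟩ => ?_) fun u v huv => ?_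
  · have := hwN ⟨e, he⟩
    induction e using Sym2.ind with
    | _ u v => simp_all
  · have := hwN ⟨s(u, v), huv⟩
    simp only [hN, mem_sdiff, mem_inter, mem_neighborFinset] at this
    exact ⟨this.1.1, this.1.2.symm⟩

end Subdivision

theorem locally_sparse_of_min_degree_no_subdivision_general {V : Type*} [Fintype V] [DecidableEq V]
    (G : SimpleGraph V) [DecidableRel G.Adj] {t m : ℕ}
    (hm : Fintype.card V = m)
    (hsub : ¬ ContainsSubdivision G (⊤ : SimpleGraph (Fin t)))
    (hdeg : ∀ v : V, (9 : ℝ) / 10 * m ≤ G.degree v) :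
    ∀ X : Finset V, (20 : ℝ) / 11 * t ≤ X.card →
      ∃ v ∈ X, ((X.filter (fun u => G.Adj v u)).card : ℝ) ≤
        (1 - m / (2 * t ^ 2)) * X.card := by
  intro X hX
  by_contra! hdense
  apply hsub
  have htX : (t : ℝ) ≤ #X := by linarith [t.cast_nonneg (α := ℝ)]
  obtain ⟨S, -, hSt, hS⟩ := Gᶜ.exists_subset_card_eq_edgeDensity_le X (by exact_mod_cast htX)
  let f : Fin t ↪ V := (S.equivFinOfCardEq hSt).symm.toEmbedding.trans (.subtype _)
  refine containsSubdivision_of_card_le_card_inter_neighborFinset G ⊤ f fun u v _ => ?_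
  have htpos : (0 : ℝ) < t := by exact_mod_cast u.pos
  have hXm : (#X : ℝ) ≤ m := by rw [← hm]; exact_mod_cast card_le_univ X
  have hdensX : (Gᶜ.edgeDensity X X : ℝ) ≤ m / (2 * t ^ 2) :=
    G.edgeDensity_compl_le (card_pos.1 (by exact_mod_cast htpos.trans_le htX))
      fun w hw => (hdense w hw).le
  have hmissing : (#(Gᶜ.interedges S S) : ℝ) ≤ m / 2 :=
    calc (#(Gᶜ.interedges S S) : ℝ) = Gᶜ.edgeDensity S S * t ^ 2 := by
          rw [SimpleGraph.edgeDensity_def, hSt]; push_cast; field_simp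
      _ ≤ m / (2 * t ^ 2) * t ^ 2 := by gcongr; exact (Rat.cast_le.2 hS).trans hdensX
      _ = m / 2 := by field_simp
  have hbad : (2 * Nat.card (⊤ \ G.comap f).edgeSet : ℝ) ≤ #(Gᶜ.interedges S S) := by
    exact_mod_cast two_mul_natCard_edgeSet_sdiff_comap_le G ⊤ f fun i =>
      ((S.equivFinOfCardEq hSt).symm i).2
  have hcommon : (G.degree (f u) + G.degree (f v) : ℝ) ≤
      #(G.neighborFinset (f u) ∩ G.neighborFinset (f v)) + m := by
    exact_mod_cast hm ▸ G.degree_add_degree_le_card_inter_add_card (f u) (f v)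
  rw [Fintype.card_fin]
  rify
  linarith [hdeg (f u), hdeg (f v)]

/-- If `G` is an `m`-vertex graph with no `K_t`-subdivision and minimum degree at least
`(9/10)m`, then `G` is `(1 - m/(2t^2), (20/11)t)`-locally sparse: every vertex set `X`
with `|X| ≥ (20/11)t` has a vertex of degree at most `(1 - m/(2t^2))|X|` in `G[X]`. -/
theorem locally_sparse_of_min_degree_no_subdivision {V : Type*} [Fintype V] [DecidableEq V]
    (G : SimpleGraph V) [DecidableRel G.Adj] {t m : ℕ} (ht : 1 ≤ t)
    (hm : Fintype.card V = m)
    (hsub : ¬ ContainsSubdivision G (⊤ : SimpleGraph (Fin t)))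
    (hdeg : ∀ v : V, (9 : ℝ) / 10 * m ≤ G.degree v) :
    ∀ X : Finset V, (20 : ℝ) / 11 * t ≤ X.card →
      ∃ v ∈ X, ((X.filter (fun u => G.Adj v u)).card : ℝ) ≤
        (1 - m / (2 * t ^ 2)) * X.card :=
  locally_sparse_of_min_degree_no_subdivision_general G hm hsub hdeg
end

section
/- Let t ≥ 1 and let G be an m-vertex graph with no K_t-subdivision, with m ≤ t^2/5. If G is (1 - m/(2t^2), (20/11)t)-locally sparse, then G contains fewer than 2^{5t} cliques. -/
open Finset Real

namespace SimpleGraph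

variable {V : Type*} (G : SimpleGraph V) [DecidableEq V] [DecidableRel G.Adj]

def cliqueCount (X : Finset V) : ℕ :=
  #(X.powerset.filter fun s : Finset V => G.IsClique (s : Set V))

def LocallySparse (β N : ℝ) : Prop :=
  ∀ X : Finset V, N ≤ #X → ∃ v ∈ X, (#{u ∈ X | G.Adj v u} : ℝ) ≤ β * #X

lemma cliqueCount_le_two_pow (X : Finset V) : G.cliqueCount X ≤ 2 ^ #X :=
  (card_filter_le _ _).trans_eq (card_powerset X)

lemma cliqueCount_le_erase_add_neighbors (X : Finset V) (v : V) :
    G.cliqueCount X ≤ G.cliqueCount (X.erase v) + G.cliqueCount {u ∈ X | G.Adj v u} := by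
  unfold cliqueCount
  rw [← card_filter_add_card_filter_not (p := fun s => v ∉ s)]
  gcongr ?_ + ?_
  · refine card_le_card fun s hs => ?_
    simp only [mem_filter, mem_powerset] at hs ⊢
    exact ⟨subset_erase.2 ⟨hs.1.1, hs.2⟩, hs.1.2⟩
  · refine card_le_card_of_injOn (fun s => s.erase v) (fun s hs => ?_) (fun s hs s' hs' h => ?_)
    · simp only [coe_filter, mem_powerset, Set.mem_ofPred_eq, not_not,
        mem_filter] at hs ⊢
      obtain ⟨⟨hsX, hs⟩, hv⟩ := hs
      refine ⟨fun u hu => ?_, hs.subset (by simp)⟩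
      obtain ⟨huv, hu⟩ := mem_erase.1 hu
      exact mem_filter.2 ⟨hsX hu, hs hv hu (Ne.symm huv)⟩
    · simp only [coe_filter, Set.mem_ofPred_eq, not_not] at hs hs'
      rw [← insert_erase hs.2, ← insert_erase hs'.2]
      exact congrArg (insert v) h

lemma card_isClique_eq_cliqueCount_univ [Fintype V] :
    Nat.card {s : Finset V // G.IsClique (s : Set V)} = G.cliqueCount univ := by
  rw [Nat.card_eq_fintype_card, Fintype.card_subtype, cliqueCount, powerset_univ]

variable {G} {N y K : ℝ}

lemma cliqueCount_le_of_card_lt (hy : 1 ≤ y) (hK : 1 ≤ K) (j : ℕ) {X : Finset V}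
    (hX : #X < N) : (G.cliqueCount X : ℝ) ≤ 2 ^ N * K ^ j * y ^ #X :=
  calc (G.cliqueCount X : ℝ) ≤ (2 : ℝ) ^ (#X : ℝ) := by
        rw [Real.rpow_natCast]; exact_mod_cast G.cliqueCount_le_two_pow X
    _ ≤ 2 ^ N := Real.rpow_le_rpow_of_exponent_le one_le_two hX.le
    _ = 2 ^ N * 1 * 1 := by ring
    _ ≤ 2 ^ N * K ^ j * y ^ #X := by gcongr <;> exact one_le_pow₀ ‹_›

theorem LocallySparse.cliqueCount_le {β : ℝ} (hG : G.LocallySparse β N) (hβ : 0 ≤ β)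
    (hy : 1 ≤ y) (hK : 1 ≤ K) (hyK : y⁻¹ + K⁻¹ ≤ 1) (j : ℕ) (X : Finset V)
    (hX : β ^ j * #X < N) : (G.cliqueCount X : ℝ) ≤ 2 ^ N * K ^ j * y ^ #X := by
  induction j generalizing X with
  | zero => exact cliqueCount_le_of_card_lt hy hK 0 (by simpa using hX)
  | succ j ihj =>
    induction X using Finset.strongInduction with
    | H X ihX =>
    rcases lt_or_ge (#X : ℝ) N with hXN | hXN
    · exact cliqueCount_le_of_card_lt hy hK _ hXN
    obtain ⟨v, hv, hdeg⟩ := hG X hXN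
    have hcard : #(X.erase v) + 1 = #X := card_erase_add_one hv
    have hE := ihX (X.erase v) (erase_ssubset hv) <| lt_of_le_of_lt
      (by gcongr; exact erase_subset v X) hX
    have hD := ihj {u ∈ X | G.Adj v u} <| lt_of_le_of_lt
      (by rw [pow_succ, mul_assoc]; gcongr) hX
    have hy0 : 0 < y := by linarith
    have hK0 : 0 < K := by linarith
    calc (G.cliqueCount X : ℝ)
        ≤ G.cliqueCount (X.erase v) + G.cliqueCount {u ∈ X | G.Adj v u} := by
          exact_mod_cast G.cliqueCount_le_erase_add_neighbors X v
      _ ≤ 2 ^ N * K ^ (j + 1) * y ^ #(X.erase v) + 2 ^ N * K ^ j * y ^ #X := by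
          refine add_le_add hE (hD.trans ?_)
          gcongr
          exact filter_subset _ _
      _ = 2 ^ N * K ^ (j + 1) * y ^ #X * (y⁻¹ + K⁻¹) := by
          rw [← hcard]; field_simp; ring
      _ ≤ 2 ^ N * K ^ (j + 1) * y ^ #X := mul_le_of_le_one_right (by positivity) hyK

end SimpleGraph

lemma Real.exp_one_mul_log_le {x : ℝ} (hx : 0 < x) : exp 1 * log x ≤ x := by
  simpa [exp_log hx] using exp_one_mul_le_exp (x := log x)

/-- AM-GM reduces this to `log √w ≤ √w / e`. -/
lemma Real.log_mul_log_le {x y w : ℝ} (hx : 1 ≤ x) (hy : 1 ≤ y) (hw : 0 ≤ w)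
    (hxy : x * y ≤ w ^ 2) : log x * log y ≤ 4 / exp 1 ^ 2 * w := by
  have hw1 : 1 ≤ w := by nlinarith
  set s := √w
  have hs1 : 1 ≤ s := one_le_sqrt.2 hw1
  have hss : s ^ 2 = w := sq_sqrt hw
  have hlogs : log s ≤ s / exp 1 := by
    rw [le_div_iff₀ (exp_pos 1), mul_comm]; exact exp_one_mul_log_le (by linarith)
  have hsum : log x + log y ≤ 4 * log s := by
    rw [← log_mul (by positivity) (by positivity)]
    calc log (x * y) ≤ log (s ^ 4) := log_le_log (by positivity) (by rw [← hss] at hxy; linarith)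
      _ = 4 * log s := by rw [log_pow]; norm_num
  have hlx := log_nonneg hx
  have hly := log_nonneg hy
  have hls := log_nonneg hs1
  calc log x * log y ≤ ((log x + log y) / 2) ^ 2 := by nlinarith [sq_nonneg (log x - log y)]
    _ ≤ (2 * (s / exp 1)) ^ 2 := by gcongr; linarith
    _ = 4 / exp 1 ^ 2 * w := by rw [← hss]; ring

lemma Real.two_rpow_neg_add_half_le_one {x : ℝ} (hx0 : 0 ≤ x) (hx : x ≤ 11 / 20) :
    (2 : ℝ) ^ (-x) + x / 2 ≤ 1 := by
  have hlog2 := log_two_gt_d9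
  have hpos : 0 < 1 + x * log 2 := by positivity
  have hexp : (2 : ℝ) ^ (-x) ≤ 1 / (1 + x * log 2) := by
    rw [rpow_def_of_pos two_pos, show log 2 * -x = -(x * log 2) by ring, exp_neg, ← one_div]
    exact one_div_le_one_div_of_le hpos (by linarith [add_one_le_exp (x * log 2)])
  have hrat : 1 / (1 + x * log 2) ≤ 1 - x / 2 := by
    have h : 1 / 2 ≤ log 2 * (1 - x / 2) := by nlinarith
    rw [div_le_iff₀ hpos]; nlinarith [mul_nonneg hx0 (sub_nonneg.2 h)]
  linarith

lemma exists_pow_mul_lt_and_sub_one_mul_le_log {β a b : ℝ} (hβ0 : 0 < β) (hβ1 : β < 1)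
    (ha : 0 < a) (hab : a ≤ b) :
    ∃ j : ℕ, β ^ j * b < a ∧ ((j : ℝ) - 1) * (1 - β) ≤ log (b / a) := by
  have hb : 0 < b := ha.trans_le hab
  have hex := exists_pow_lt_of_lt_one (div_pos ha hb) hβ1
  set J := Nat.find hex
  have hJ0 : J ≠ 0 := by
    intro h
    have := Nat.find_spec hex
    rw [show Nat.find hex = 0 from h, pow_zero, lt_div_iff₀ hb] at this
    linarith
  have hmin : a / b ≤ β ^ (J - 1) := not_lt.1 (Nat.find_min hex (by omega))
  refine ⟨J, (lt_div_iff₀ hb).1 (Nat.find_spec hex), ?_⟩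
  have hlog : log (a / b) ≤ (J - 1 : ℕ) * log β := by
    rw [← log_pow]; exact log_le_log (by positivity) hmin
  rw [Nat.cast_sub (by omega), Nat.cast_one] at hlog
  have hJ1 : (1 : ℝ) ≤ J := by exact_mod_cast Nat.one_le_iff_ne_zero.2 hJ0
  have := log_le_sub_one_of_pos hβ0
  rw [← inv_div, log_inv]
  nlinarith

lemma two_mul_div_pow_lt_two_rpow {t m : ℝ} {j : ℕ} (ht : 1 ≤ t) (htm : 20 / 11 * t ≤ m)
    (hmt : m ≤ t ^ 2 / 5) (hj : ((j : ℝ) - 1) * (m / (2 * t ^ 2)) ≤ log (m / (20 / 11 * t))) :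
    (2 * m / t) ^ j < (2 : ℝ) ^ (24 / 11 * t) := by
  have ht0 : 0 < t := by linarith
  have hm0 : 0 < m := by linarith
  have hmt1 : 1 ≤ m / t := by rw [le_div_iff₀ ht0]; linarith
  have hK1 : 1 ≤ 2 * m / t := by rw [mul_div_assoc]; linarith
  have hN1 : 1 ≤ m / (20 / 11 * t) := by rw [le_div_iff₀ (by positivity)]; linarith
  set L := log (2 * m / t)
  have hL0 : 0 ≤ L := log_nonneg hK1
  have hj' : (j : ℝ) ≤ 1 + 2 * t ^ 2 / m * log (m / (20 / 11 * t)) := by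
    calc (j : ℝ) = 1 + 2 * t ^ 2 / m * (((j : ℝ) - 1) * (m / (2 * t ^ 2))) := by
          field_simp; ring
      _ ≤ _ := by gcongr
  have hE : 2.718 < exp 1 := lt_trans (by norm_num) exp_one_gt_d9
  have hL : exp 1 * L ≤ 2 / 5 * t := by
    refine (exp_one_mul_log_le (by positivity)).trans ?_
    rw [div_le_iff₀ ht0]; nlinarith
  have hLL : exp 1 ^ 2 * (2 * t ^ 2 / m * (log (m / (20 / 11 * t)) * L)) ≤ 8.4 * t := by
    -- `1.05 * (m / t)` bounds the geometric mean `√(11/10) * (m / t)` of the two arguments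
    have := log_mul_log_le hN1 hK1 (w := 1.05 * (m / t)) (by positivity) (by
      field_simp; nlinarith)
    calc exp 1 ^ 2 * (2 * t ^ 2 / m * (log (m / (20 / 11 * t)) * L))
        ≤ exp 1 ^ 2 * (2 * t ^ 2 / m * (4 / exp 1 ^ 2 * (1.05 * (m / t)))) := by gcongr
      _ = 8.4 * t := by field_simp; ring
  have hlog2 := log_two_gt_d9
  rw [← log_lt_log_iff (by positivity) (by positivity), log_pow, log_rpow two_pos]
  calc (j : ℝ) * L ≤ (1 + 2 * t ^ 2 / m * log (m / (20 / 11 * t))) * L := by gcongr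
    _ = L + 2 * t ^ 2 / m * (log (m / (20 / 11 * t)) * L) := by ring
    _ ≤ 0.148 * t + 1.14 * t := by
      have hE2 : 7.387 ≤ exp 1 ^ 2 := by nlinarith
      have hX : 0 ≤ 2 * t ^ 2 / m * (log (m / (20 / 11 * t)) * L) := by
        have := log_nonneg hN1; positivity
      exact add_le_add (by nlinarith) (by nlinarith)
    _ < 24 / 11 * t * log 2 := by nlinarith

theorem clique_count_of_locally_sparse_general {V : Type*} [Fintype V] [DecidableEq V]
    (G : SimpleGraph V) [DecidableRel G.Adj] {t m : ℕ} (ht : 1 ≤ t)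
    (hm : Fintype.card V = m) (hmt : (m : ℝ) ≤ t ^ 2 / 5)
    (hsparse : ∀ X : Finset V, (20 : ℝ) / 11 * t ≤ X.card →
      ∃ v ∈ X, ((X.filter (fun u => G.Adj v u)).card : ℝ) ≤
        (1 - m / (2 * t ^ 2)) * X.card) :
    Nat.card {s : Finset V // G.IsClique (s : Set V)} < 2 ^ (5 * t) := by
  rw [G.card_isClique_eq_cliqueCount_univ]
  have ht0 : (0 : ℝ) < t := by exact_mod_cast ht
  rcases lt_or_ge (m : ℝ) (20 / 11 * t) with hsmall | hlarge
  · have hm5 : m < 5 * t := by exact_mod_cast (by linarith : (m : ℝ) < 5 * t)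
    calc G.cliqueCount univ ≤ 2 ^ m := by simpa [hm] using G.cliqueCount_le_two_pow univ
      _ < 2 ^ (5 * t) := Nat.pow_lt_pow_right one_lt_two hm5
  have hm0 : (0 : ℝ) < m := by linarith
  have hG : G.LocallySparse (1 - m / (2 * t ^ 2)) (20 / 11 * t) := hsparse
  have hβ0 : 0 < 1 - (m : ℝ) / (2 * t ^ 2) := by rw [sub_pos, div_lt_one (by positivity)]; nlinarith
  have hβ1 : 1 - (m : ℝ) / (2 * t ^ 2) < 1 := by simp only [sub_lt_self_iff]; positivity
  obtain ⟨j, hj, hjlog⟩ :=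
    exists_pow_mul_lt_and_sub_one_mul_le_log hβ0 hβ1 (by positivity) hlarge
  rw [sub_sub_cancel] at hjlog
  have hyK : ((2 : ℝ) ^ ((t : ℝ) / m))⁻¹ + (2 * (m : ℝ) / t)⁻¹ ≤ 1 := by
    rw [← rpow_neg zero_le_two, inv_div, div_mul_eq_div_div_swap]
    exact two_rpow_neg_add_half_le_one (by positivity) (by rw [div_le_iff₀ hm0]; nlinarith)
  have hcount := hG.cliqueCount_le hβ0.le (one_le_rpow one_le_two (by positivity))
    (by rw [le_div_iff₀ ht0]; linarith) hyK j univ (by rwa [card_univ, hm])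
  rw [card_univ, hm, ← rpow_mul_natCast zero_le_two, div_mul_cancel₀ _ hm0.ne'] at hcount
  have hK := two_mul_div_pow_lt_two_rpow (by exact_mod_cast ht) hlarge hmt hjlog
  have hreal : (G.cliqueCount univ : ℝ) < 2 ^ (5 * t) := calc
    _ ≤ (2 : ℝ) ^ (20 / 11 * (t : ℝ)) * (2 * m / t) ^ j * 2 ^ (t : ℝ) := hcount
    _ < (2 : ℝ) ^ (20 / 11 * (t : ℝ)) * 2 ^ (24 / 11 * (t : ℝ)) * 2 ^ (t : ℝ) := by gcongr
    _ = 2 ^ (5 * t) := by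
      rw [← rpow_add two_pos, ← rpow_add two_pos, ← rpow_natCast]
      push_cast; ring_nf
  exact_mod_cast hreal

/-- If `G` is an `m`-vertex graph with no `K_t`-subdivision, `m ≤ t^2/5`, and `G` is
`(1 - m/(2t^2), (20/11)t)`-locally sparse, then `G` has fewer than `2^{5t}` cliques. -/
theorem clique_count_of_locally_sparse {V : Type*} [Fintype V] [DecidableEq V]
    (G : SimpleGraph V) [DecidableRel G.Adj] {t m : ℕ} (ht : 1 ≤ t)
    (hm : Fintype.card V = m) (hmt : (m : ℝ) ≤ t ^ 2 / 5)
    (hsub : ¬ ContainsSubdivision G (⊤ : SimpleGraph (Fin t)))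
    (hsparse : ∀ X : Finset V, (20 : ℝ) / 11 * t ≤ X.card →
      ∃ v ∈ X, ((X.filter (fun u => G.Adj v u)).card : ℝ) ≤
        (1 - m / (2 * t ^ 2)) * X.card) :
    Nat.card {s : Finset V // G.IsClique (s : Set V)} < 2 ^ (5 * t) :=
  clique_count_of_locally_sparse_general G ht hm hmt hsparse
end

section
/- For t ≥ 2 and n ≥ t - 2, the (t-2)-th power of the n-vertex path contains exactly 2^{t-2}(n - t + 3) cliques (including the empty set). -/
/-- The `k`-th power of the path on `n` vertices `0, 1, …, n-1`: two distinct vertices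
are adjacent iff their distance is at most `k`. -/
def pathPower (n k : ℕ) : SimpleGraph (Fin n) where
  Adj i j := i ≠ j ∧ i.val ≤ j.val + k ∧ j.val ≤ i.val + k
  symm := ⟨fun i j ⟨h1, h2, h3⟩ => ⟨h1.symm, h3, h2⟩⟩
  loopless := ⟨fun i h => h.1 rfl⟩

/-!
A clique of the `k`-th path power on `0, …, n` that contains the last vertex `n` is `n`
together with an arbitrary subset of the `k` vertices `n - k, …, n - 1`. So once `n ≥ k`,
adding a vertex adds exactly `2 ^ k` cliques, and for `n = k` the graph is complete with
`2 ^ k` cliques.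
-/

open Finset

def narrowSubsets (n k : ℕ) : Finset (Finset ℕ) :=
  (range n).powerset.filter fun s => ∀ i ∈ s, ∀ j ∈ s, i ≤ j + k

lemma narrowSubsets_eq_powerset {n k : ℕ} (h : n ≤ k + 1) :
    narrowSubsets n k = (range n).powerset :=
  filter_true_of_mem fun s hs i hi j _ => by
    have := mem_range.mp (mem_powerset.mp hs hi); omega

lemma filter_insert_narrow_eq_powerset_Ico (n k : ℕ) :
    ((range n).powerset.filter fun t : Finset ℕ =>
      ∀ i ∈ insert n t, ∀ j ∈ insert n t, i ≤ j + k) =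
      (Ico (n - k) n).powerset := by
  ext t
  simp only [mem_filter, mem_powerset, subset_iff, mem_range, mem_Ico, mem_insert]
  constructor
  · rintro ⟨hlt, hnarrow⟩ i hi
    exact ⟨by have := hnarrow n (.inl rfl) i (.inr hi); omega, hlt hi⟩
  · intro ht
    refine ⟨fun i hi => (ht hi).2, ?_⟩
    rintro i (rfl | hi) j (rfl | hj) <;> grind

lemma narrowSubsets_succ (n k : ℕ) :
    narrowSubsets (n + 1) k = narrowSubsets n k ∪ (Ico (n - k) n).powerset.image (insert n) := by
  rw [narrowSubsets, range_add_one, powerset_insert, filter_union, filter_image,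
    filter_insert_narrow_eq_powerset_Ico, narrowSubsets]

lemma card_narrowSubsets_succ {n k : ℕ} (h : k ≤ n) :
    #(narrowSubsets (n + 1) k) = #(narrowSubsets n k) + 2 ^ k := by
  have hn : ∀ t ∈ (Ico (n - k) n).powerset, n ∉ t := fun t ht hn => by
    simpa using mem_powerset.mp ht hn
  rw [narrowSubsets_succ, card_union_of_disjoint, card_image_of_injOn, card_powerset,
    Nat.card_Ico, Nat.sub_sub_self h]
  · exact insert_erase_invOn.2.injOn.mono hn
  · refine disjoint_left.mpr fun s hs hs' => ?_
    obtain ⟨t, -, rfl⟩ := mem_image.mp hs'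
    simpa using mem_powerset.mp (mem_filter.mp hs).1 (mem_insert_self n t)

lemma card_narrowSubsets {n k : ℕ} (h : k ≤ n) : #(narrowSubsets n k) = 2 ^ k * (n + 1 - k) := by
  induction n, h using Nat.le_induction with
  | base => simp [narrowSubsets_eq_powerset]
  | succ n hkn ih =>
    rw [card_narrowSubsets_succ hkn, ih, Nat.sub_add_comm (by omega : k ≤ n + 1)]
    ring

lemma isClique_pathPower_iff {n k : ℕ} {s : Finset (Fin n)} :
    (pathPower n k).IsClique (s : Set (Fin n)) ↔ ∀ i ∈ s, ∀ j ∈ s, i.val ≤ j.val + k := by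
  refine ⟨fun h i hi j hj => ?_, fun h i hi j hj hij => ⟨hij, h i hi j hj, h j hj i hi⟩⟩
  rcases eq_or_ne i j with rfl | hij
  · omega
  · exact (h hi hj hij).2.1

lemma card_cliques_pathPower_eq (n k : ℕ) :
    Nat.card {s : Finset (Fin n) // (pathPower n k).IsClique (s : Set (Fin n))} =
      #(narrowSubsets n k) := by
  classical
  rw [Nat.card_eq_fintype_card, Fintype.card_subtype,
    ← card_image_of_injective _ (image_injective Fin.val_injective), narrowSubsets,
    ← image_fin_univ, powerset_image, powerset_univ, filter_image]
  simp [isClique_pathPower_iff]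

lemma card_cliques_pathPower {n k : ℕ} (h : k ≤ n) :
    Nat.card {s : Finset (Fin n) // (pathPower n k).IsClique (s : Set (Fin n))} =
      2 ^ k * (n + 1 - k) := by
  rw [card_cliques_pathPower_eq, card_narrowSubsets h]

/-- For `t ≥ 2` and `n ≥ t - 2`, the `(t-2)`-th power of the `n`-vertex path has exactly
`2^{t-2}·(n - t + 3)` cliques (including the empty set). -/
theorem clique_count_pathPower {n t : ℕ} (ht : 2 ≤ t) (hn : t - 2 ≤ n) :
    Nat.card {s : Finset (Fin n) // (pathPower n (t - 2)).IsClique (s : Set (Fin n))} =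
      2 ^ (t - 2) * (n + 3 - t) := by
  rw [card_cliques_pathPower hn]
  congr 1
  omega
end

section
/- The complete k-partite graph K_{2,2,...,2} with k parts of size 2 contains no K_t-subdivision for any t > ⌊3k/2⌋. -/
/-- The complete `k`-partite graph `K_{2,2,…,2}` with `k` parts of size `2`: vertices are
pairs `(i, j)` with `i ∈ Fin k`, `j ∈ Fin 2`, and two vertices are adjacent iff they lie
in different parts. -/
def cocktailParty (k : ℕ) : SimpleGraph (Fin k × Fin 2) where
  Adj u v := u.1 ≠ v.1
  symm := ⟨fun _ _ h => h.symm⟩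
  loopless := ⟨fun _ h => h rfl⟩

/-!
Let `S` be the set of branch vertices, so `|S| = t`. The two vertices of a part lying in `S` are
non-adjacent, so the path joining them has an interior vertex, which lies outside `S` and on no
other path. Hence the number `a` of parts contained in `S` is at most `2k - t`. Every other part
meets the complement of `S`, so also `k - a ≤ 2k - t`. Adding, `k ≤ 2 (2k - t)`, i.e. `2t ≤ 3k`.
-/

namespace SimpleGraph.Walk

variable {V : Type*} {G : SimpleGraph V}

theorem support_tail_dropLast_ne_nil {u v : V} (w : G.Walk u v) (hne : u ≠ v)
    (hadj : ¬G.Adj u v) : w.support.tail.dropLast ≠ [] := by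
  cases w with
  | nil => exact absurd rfl hne
  | cons h q =>
    cases q with
    | nil => exact absurd h hadj
    | cons _ q => simp [List.dropLast_cons_of_ne_nil q.support_ne_nil]

end SimpleGraph.Walk

open SimpleGraph

theorem ContainsSubdivision.exists_ncard_nonedges_le {V W : Type*} [Finite V]
    {G : SimpleGraph V} (h : ContainsSubdivision G (⊤ : SimpleGraph W)) :
    ∃ f : W → V, Function.Injective f ∧
      (Gᶜ.edgeSet ∩ (Set.range f).sym2).ncard ≤ (Set.range f)ᶜ.ncard := by
  obtain ⟨f, p, hinj, -, hint, hdisj⟩ := h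
  refine ⟨f, hinj, ?_⟩
  have hpick : ∀ e, ∃ x, e ∈ Gᶜ.edgeSet ∩ (Set.range f).sym2 → ∃ (u v : W) (huv : u ≠ v),
      Sym2.map f s(u, v) = e ∧ x ∈ (p huv).support.tail.dropLast := by
    intro e
    by_cases he : e ∈ Gᶜ.edgeSet ∩ (Set.range f).sym2
    · obtain ⟨he, hS⟩ := he
      induction e using Sym2.ind with | h a b => ?_
      obtain ⟨⟨u, rfl⟩, ⟨v, rfl⟩⟩ := Set.mk_mem_sym2_iff.mp hS
      obtain ⟨hne, hnadj⟩ := (compl_adj G _ _).mp he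
      have huv : u ≠ v := fun h => hne (congrArg f h)
      obtain ⟨x, hx⟩ := List.exists_mem_of_ne_nil _
        ((p huv).support_tail_dropLast_ne_nil hne hnadj)
      exact ⟨x, fun _ => ⟨u, v, huv, rfl, hx⟩⟩
    · exact ⟨(Quot.out e).1, fun h => absurd h he⟩
  choose g hg using hpick
  refine Set.ncard_le_ncard_of_injOn g (fun e he => ?_) fun e he e' he' hgg => ?_
  · obtain ⟨u, v, huv, -, hx⟩ := hg e he
    exact hint u v huv _ hx
  · obtain ⟨u, v, huv, rfl, hx⟩ := hg e he
    obtain ⟨u', v', huv', rfl, hx'⟩ := hg _ he'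
    by_contra hne
    have hedge : s(u, v) ≠ s(u', v') := fun h => hne (by rw [h])
    exact hdisj u v u' v' huv huv' hedge _ hx (hgg ▸ hx')

theorem le_ncard_setOf_forall_mem_add_ncard_compl {α β : Type*} [Finite α] [Finite β]
    (S : Set (α × β)) : Nat.card α ≤ {a | ∀ b, (a, b) ∈ S}.ncard + Sᶜ.ncard := by
  have hsub : {a | ∀ b, (a, b) ∈ S}ᶜ ⊆ Prod.fst '' Sᶜ := by
    intro a ha
    obtain ⟨b, hb⟩ := not_forall.mp ha
    exact ⟨(a, b), hb, rfl⟩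
  calc Nat.card α = {a | ∀ b, (a, b) ∈ S}.ncard + {a | ∀ b, (a, b) ∈ S}ᶜ.ncard :=
        (Set.ncard_add_ncard_compl _).symm
    _ ≤ {a | ∀ b, (a, b) ∈ S}.ncard + Sᶜ.ncard := by
        gcongr
        exact (Set.ncard_le_ncard hsub).trans (Set.ncard_image_le (Set.toFinite _))

theorem ncard_setOf_forall_mem_le_ncard_nonedges_cocktailParty {k : ℕ}
    (S : Set (Fin k × Fin 2)) :
    {i | ∀ j, (i, j) ∈ S}.ncard ≤ ((cocktailParty k)ᶜ.edgeSet ∩ S.sym2).ncard := by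
  refine Set.ncard_le_ncard_of_injOn (fun i => s((i, 0), (i, 1))) ?_ ?_
  · intro i hi
    refine ⟨?_, Set.mk_mem_sym2_iff.mpr ⟨hi 0, hi 1⟩⟩
    simp [cocktailParty]
  · intro i _ i' _ h
    simpa using h

/-- `K_{2,2,…,2}` with `k` parts of size `2` has no `K_t`-subdivision for any
`t > ⌊3k/2⌋`. -/
theorem cocktailParty_no_subdivision (k t : ℕ) (ht : 3 * k / 2 < t) :
    ¬ ContainsSubdivision (cocktailParty k) (⊤ : SimpleGraph (Fin t)) := by
  intro h
  obtain ⟨f, hinj, hnonedges⟩ := h.exists_ncard_nonedges_le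
  have hbranch : (Set.range f).ncard = t := by simp [Set.ncard_range_of_injective hinj]
  have hrest : (Set.range f)ᶜ.ncard + t = 2 * k := by
    simpa [hbranch, mul_comm] using Set.ncard_compl_add_ncard (Set.range f)
  have hfull := ncard_setOf_forall_mem_le_ncard_nonedges_cocktailParty (Set.range f)
  have hparts := le_ncard_setOf_forall_mem_add_ncard_compl (Set.range f)
  rw [Nat.card_fin] at hparts
  omega
end
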